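/- arXiv:2211.11624 — 5 statements merged into one kernel-verified Lean document; each statement's English description precedes it below -/
import Mathlib

section
/- Let K₀ and K₁ be kernels with positive definite Gram matrices at the (n+1)-point design X_n ∪ {x}. Writing Φ_KL(X) = (1/2)[tr(K₀(X)K₁(X)⁻¹) + tr(K₁(X)K₀(X)⁻¹)] − |X|, one has Φ_KL(X_n ∪ {x}) = Φ_KL(X_n) + (1/2)[E₁{e₀(x)²}/E₀{e₀(x)²} + E₀{e₁(x)²}/E₁{e₁(x)²}] − 1, where E_i{e_j(x)²} is the mean squared prediction error at x of the kriging predictor based on kernel K_j when the true covariance is K_i. -/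
/-!
With the new point placed last, the Gram matrices at `Xₙ ∪ {x}` are bordered matrices
`[[K_i(Xₙ), k_i], [k_iᵀ, K_i(x,x)]]`. The block (Schur complement) inverse of the bordered
`K_j`-matrix turns `tr(K_i(Xₙ ∪ {x}) K_j(Xₙ ∪ {x})⁻¹)` into `tr(K_i(Xₙ) K_j(Xₙ)⁻¹)` plus a
scalar quotient: the Schur complement `K_j(x,x) - k_jᵀ K_j⁻¹ k_j` is the kriging variance
`E_j{e_j(x)²}`, and the numerator collected from the other blocks is `E_i{e_j(x)²}`.
-/

open Matrix

/-- Mean squared prediction error at `x` of the kriging predictor based on kernel `Kj`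
(with cross-covariance vector `kj` and Gram matrix `Gj` at the design) when the true
covariance is `Ki` (Gram matrix `Gi`, cross-covariance vector `ki`). -/
noncomputable def mse {n : ℕ} (Kixx : ℝ) (ki kj : Fin n → ℝ)
    (Gi Gj : Matrix (Fin n) (Fin n) ℝ) : ℝ :=
  Kixx + kj ⬝ᵥ (Gj⁻¹ * Gi * Gj⁻¹) *ᵥ kj - 2 * (kj ⬝ᵥ Gj⁻¹ *ᵥ ki)

namespace Matrix

variable {l m R : Type*} [Fintype l] [Fintype m]

theorem trace_fromBlocks [AddCommMonoid R] (A : Matrix m m R) (B : Matrix m l R)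
    (C : Matrix l m R) (D : Matrix l l R) :
    (fromBlocks A B C D).trace = A.trace + D.trace := by
  simp [trace, Fintype.sum_sum_type]

theorem trace_submatrix_equiv [AddCommMonoid R] (A : Matrix m m R) (e : l ≃ m) :
    (A.submatrix e e).trace = A.trace :=
  Fintype.sum_equiv e _ _ fun _ => rfl

theorem replicateRow_mul_mul_replicateCol [NonUnitalSemiring R] {ι : Type*}
    (M : Matrix m m R) (v w : m → R) :
    replicateRow ι v * M * replicateCol ι w = of fun _ _ => v ⬝ᵥ M *ᵥ w := by
  rw [← replicateRow_vecMul, replicateRow_mul_replicateCol, dotProduct_mulVec]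

variable [DecidableEq l] [DecidableEq m] [CommRing R]

theorem trace_mul_inv_fromBlocks (A : Matrix m m R) (B : Matrix m l R) (C : Matrix l m R)
    (D : Matrix l l R) (P : Matrix m m R) (Q : Matrix m l R) (S : Matrix l m R)
    (T : Matrix l l R) (hA : IsUnit A.det) (hM : IsUnit (fromBlocks A B C D).det) :
    (fromBlocks P Q S T * (fromBlocks A B C D)⁻¹).trace =
      (P * A⁻¹).trace + ((T - S * A⁻¹ * B - C * A⁻¹ * Q + C * A⁻¹ * P * A⁻¹ * B) *
        (D - C * A⁻¹ * B)⁻¹).trace := by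
  let := invertibleOfIsUnitDet A hA
  have hSchur : IsUnit (D - C * ⅟A * B).det := by
    rw [det_fromBlocks₁₁] at hM
    exact isUnit_of_mul_isUnit_right hM
  let := invertibleOfIsUnitDet _ hSchur
  let := fromBlocks₁₁Invertible A B C D
  rw [← invOf_eq_nonsing_inv, invOf_fromBlocks₁₁_eq, fromBlocks_multiply, trace_fromBlocks]
  simp only [invOf_eq_nonsing_inv, Matrix.mul_add, Matrix.add_mul, Matrix.sub_mul,
    Matrix.mul_neg, trace_add, trace_sub, trace_neg]
  set Sinv := (D - C * A⁻¹ * B)⁻¹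
  have hP := trace_mul_comm (C * A⁻¹) (P * A⁻¹ * B * Sinv)
  have hQ := trace_mul_comm (C * A⁻¹) (Q * Sinv)
  simp only [Matrix.mul_assoc] at hP hQ ⊢
  rw [hP, hQ]
  ring

end Matrix

theorem mse_self {n : ℕ} (α : ℝ) (a : Fin n → ℝ) (A : Matrix (Fin n) (Fin n) ℝ)
    (hA : IsUnit A.det) : mse α a a A A = α - a ⬝ᵥ A⁻¹ *ᵥ a := by
  rw [mse, nonsing_inv_mul _ hA, Matrix.one_mul]
  ring

theorem trace_mul_inv_fromBlocks_replicate {n : ℕ} (A P : Matrix (Fin n) (Fin n) ℝ)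
    (a b : Fin n → ℝ) (α β : ℝ) (hAs : A.IsSymm) (hA : IsUnit A.det)
    (hM : IsUnit (fromBlocks A (replicateCol (Fin 1) a) (replicateRow (Fin 1) a)
      (of fun _ _ => α)).det) :
    (fromBlocks P (replicateCol (Fin 1) b) (replicateRow (Fin 1) b) (of fun _ _ => β) *
      (fromBlocks A (replicateCol (Fin 1) a) (replicateRow (Fin 1) a) (of fun _ _ => α))⁻¹).trace =
      (P * A⁻¹).trace + mse β b a P A / mse α a a A A := by
  have hba : b ⬝ᵥ A⁻¹ *ᵥ a = a ⬝ᵥ A⁻¹ *ᵥ b := by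
    rw [dotProduct_mulVec, ← mulVec_transpose, transpose_nonsing_inv, hAs.eq, dotProduct_comm]
  rw [trace_mul_inv_fromBlocks _ _ _ _ _ _ _ _ hA hM, mse_self _ _ _ hA, mse,
    show replicateRow (Fin 1) a * A⁻¹ * P * A⁻¹ * replicateCol (Fin 1) a =
      replicateRow (Fin 1) a * (A⁻¹ * P * A⁻¹) * replicateCol (Fin 1) a by
        simp only [Matrix.mul_assoc]]
  simp only [replicateRow_mul_mul_replicateCol, hba, trace_fin_one, inv_subsingleton]
  simp only [of_sub_of, of_add_of, of_apply, mul_apply, Matrix.sub_apply, Ring.inverse_eq_inv',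
    Finset.univ_unique, Fin.default_eq_zero, Finset.sum_singleton, diagonal_apply_eq, Pi.add_apply,
    Pi.sub_apply]
  ring

def kernelMatrix {ι X R : Type*} (K : X → X → R) (p : ι → X) : Matrix ι ι R :=
  of fun i j => K (p i) (p j)

section KernelMatrix

variable {X R : Type*} {n : ℕ}

theorem kernelMatrix_snoc_comm (K : X → X → R) (p : Fin n → X) (x : X)
    (h : (kernelMatrix K (Fin.snoc p x : Fin (n + 1) → X)).IsSymm) (i : Fin n) :
    K (p i) x = K x (p i) := by
  simpa [kernelMatrix] using h.apply (Fin.last n) i.castSucc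

theorem kernelMatrix_snoc_submatrix_finSumFinEquiv (K : X → X → R) (p : Fin n → X) (x : X)
    (hK : ∀ i, K (p i) x = K x (p i)) :
    (kernelMatrix K (Fin.snoc p x : Fin (n + 1) → X)).submatrix finSumFinEquiv finSumFinEquiv =
      fromBlocks (kernelMatrix K p) (replicateCol (Fin 1) fun i => K x (p i))
        (replicateRow (Fin 1) fun i => K x (p i)) (of fun _ _ => K x x) := by
  have hcast (j : Fin n) : Fin.castAdd 1 j = j.castSucc := rfl
  have hlast : Fin.natAdd n (0 : Fin 1) = Fin.last n := rfl
  ext (i | i) (j | j) <;> simp [kernelMatrix, hK, Fin.fin_one_eq_zero, hcast, hlast]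

theorem trace_kernelMatrix_snoc_mul_inv (K L : X → X → ℝ) (p : Fin n → X) (x : X)
    (hK' : (kernelMatrix K (Fin.snoc p x : Fin (n + 1) → X)).IsSymm)
    (hL' : (kernelMatrix L (Fin.snoc p x : Fin (n + 1) → X)).IsSymm)
    (hL : (kernelMatrix L p).IsSymm) (hLdet : IsUnit (kernelMatrix L p).det)
    (hL'det : IsUnit (kernelMatrix L (Fin.snoc p x : Fin (n + 1) → X)).det) :
    (kernelMatrix K (Fin.snoc p x : Fin (n + 1) → X) *
        (kernelMatrix L (Fin.snoc p x : Fin (n + 1) → X))⁻¹).trace =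
      (kernelMatrix K p * (kernelMatrix L p)⁻¹).trace +
        mse (K x x) (fun i => K x (p i)) (fun i => L x (p i)) (kernelMatrix K p)
            (kernelMatrix L p) /
          mse (L x x) (fun i => L x (p i)) (fun i => L x (p i)) (kernelMatrix L p)
            (kernelMatrix L p) := by
  have hKblocks :=
    kernelMatrix_snoc_submatrix_finSumFinEquiv K p x (kernelMatrix_snoc_comm K p x hK')
  have hLblocks :=
    kernelMatrix_snoc_submatrix_finSumFinEquiv L p x (kernelMatrix_snoc_comm L p x hL')
  rw [← det_submatrix_equiv_self finSumFinEquiv, hLblocks] at hL'det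
  rw [← trace_submatrix_equiv _ finSumFinEquiv, ← submatrix_mul_equiv _ _ _ finSumFinEquiv,
    ← inv_submatrix_equiv, hKblocks, hLblocks]
  exact trace_mul_inv_fromBlocks_replicate _ _ _ _ _ _ hL hLdet hL'det

end KernelMatrix

/-- Adding a point `x` to the design `Xₙ` increases the symmetric KL criterion
`Φ_KL(X) = (1/2)[tr(K₀(X)K₁(X)⁻¹) + tr(K₁(X)K₀(X)⁻¹)] − |X|` by
`(1/2)[E₁{e₀(x)²}/E₀{e₀(x)²} + E₀{e₁(x)²}/E₁{e₁(x)²}] − 1`. -/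
theorem stmt_6 {X : Type*} (K₀ K₁ : X → X → ℝ) (n : ℕ) (pts : Fin n → X) (x : X)
    (G₀ G₁ : Matrix (Fin n) (Fin n) ℝ)
    (hG₀ : G₀ = Matrix.of fun i j => K₀ (pts i) (pts j))
    (hG₁ : G₁ = Matrix.of fun i j => K₁ (pts i) (pts j))
    (G₀' G₁' : Matrix (Fin (n + 1)) (Fin (n + 1)) ℝ)
    (hG₀' : G₀' = Matrix.of fun i j => K₀ ((Fin.snoc pts x : Fin (n+1) → X) i) ((Fin.snoc pts x : Fin (n+1) → X) j))
    (hG₁' : G₁' = Matrix.of fun i j => K₁ ((Fin.snoc pts x : Fin (n+1) → X) i) ((Fin.snoc pts x : Fin (n+1) → X) j))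
    (hG₀pd : G₀.PosDef) (hG₁pd : G₁.PosDef)
    (hG₀'pd : G₀'.PosDef) (hG₁'pd : G₁'.PosDef)
    (k₀ k₁ : Fin n → ℝ)
    (hk₀ : k₀ = fun i => K₀ x (pts i)) (hk₁ : k₁ = fun i => K₁ x (pts i)) :
    (1 / 2) * ((G₀' * G₁'⁻¹).trace + (G₁' * G₀'⁻¹).trace) - (n + 1 : ℝ) =
      (1 / 2) * ((G₀ * G₁⁻¹).trace + (G₁ * G₀⁻¹).trace) - (n : ℝ) +
        (1 / 2) * (mse (K₁ x x) k₁ k₀ G₁ G₀ / mse (K₀ x x) k₀ k₀ G₀ G₀ +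
          mse (K₀ x x) k₀ k₁ G₀ G₁ / mse (K₁ x x) k₁ k₁ G₁ G₁) - 1 := by
  obtain rfl : G₀ = kernelMatrix K₀ pts := hG₀
  obtain rfl : G₁ = kernelMatrix K₁ pts := hG₁
  obtain rfl : G₀' = kernelMatrix K₀ (Fin.snoc pts x : Fin (n + 1) → X) := hG₀'
  obtain rfl : G₁' = kernelMatrix K₁ (Fin.snoc pts x : Fin (n + 1) → X) := hG₁'
  subst hk₀ hk₁
  have isSymm {ι : Type} [Fintype ι] {G : Matrix ι ι ℝ} (hG : G.PosDef) : G.IsSymm :=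
    isHermitian_iff_isSymm.mp hG.isHermitian
  rw [trace_kernelMatrix_snoc_mul_inv K₀ K₁ pts x (isSymm hG₀'pd) (isSymm hG₁'pd)
      (isSymm hG₁pd) hG₁pd.det_pos.ne'.isUnit hG₁'pd.det_pos.ne'.isUnit,
    trace_kernelMatrix_snoc_mul_inv K₁ K₀ pts x (isSymm hG₁'pd) (isSymm hG₀'pd)
      (isSymm hG₀pd) hG₀pd.det_pos.ne'.isUnit hG₀'pd.det_pos.ne'.isUnit]
  ring
end

section
/- Let μ be a probability measure on a compact set X ⊂ ℝ^d and K₀, K₁ kernels with invertible Gram matrices K₀, K₁ at X_n. Then ∫_X E₀{[e₁(x) − e₀(x)]²} dμ(x) = tr[K₀⁻¹A₀(μ) + K₁⁻¹K₀K₁⁻¹A₁(μ) − 2K₁⁻¹A₀₁(μ)], where A_i(μ) = ∫ k_i(x)k_i(x)ᵀ dμ(x) and A₀₁(μ) = ∫ k₀(x)k₁(x)ᵀ dμ(x). -/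
/-! Each quadratic form is a trace, `u ⬝ᵥ M *ᵥ v = tr (M * v uᵀ)`, and the trace of `M * B x` is linear
in the entries of `B x`, so integration passes inside the trace onto the outer products `v uᵀ`. -/

open Matrix MeasureTheory

section

variable {ι 𝕜 : Type*} [Fintype ι] [RCLike 𝕜]

theorem Matrix.dotProduct_mulVec_eq_trace_mul_vecMulVec (M : Matrix ι ι 𝕜) (u v : ι → 𝕜) :
    u ⬝ᵥ M *ᵥ v = (M * vecMulVec v u).trace := by
  rw [mul_vecMulVec, trace_vecMulVec, dotProduct_comm]

variable {X : Type*} [MeasurableSpace X] {μ : Measure X}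

theorem integrable_trace_mul (M : Matrix ι ι 𝕜) {B : X → Matrix ι ι 𝕜}
    (hB : ∀ i j, Integrable (fun x => B x i j) μ) :
    Integrable (fun x => (M * B x).trace) μ := by
  simp only [trace, diag, mul_apply]
  exact integrable_finsetSum _ fun i _ =>
    integrable_finsetSum _ fun j _ => (hB j i).const_mul _

theorem integral_trace_mul (M : Matrix ι ι 𝕜) {B : X → Matrix ι ι 𝕜}
    (hB : ∀ i j, Integrable (fun x => B x i j) μ) :
    ∫ x, (M * B x).trace ∂μ = (M * of fun i j => ∫ x, B x i j ∂μ).trace := by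
  simp only [trace, diag, mul_apply, of_apply]
  have hterm (i j : ι) : Integrable (fun x => M i j * B x j i) μ := (hB j i).const_mul _
  rw [integral_finsetSum _ fun i _ => integrable_finsetSum _ fun j _ => hterm i j]
  refine Finset.sum_congr rfl fun i _ => ?_
  rw [integral_finsetSum _ fun j _ => hterm i j]
  simp only [integral_const_mul]

theorem integrable_dotProduct_mulVec (M : Matrix ι ι 𝕜) {u v : X → ι → 𝕜}
    (h : ∀ i j, Integrable (fun x => v x i * u x j) μ) :
    Integrable (fun x => u x ⬝ᵥ M *ᵥ v x) μ := by
  simpa only [dotProduct_mulVec_eq_trace_mul_vecMulVec] using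
    integrable_trace_mul M (B := fun x => vecMulVec (v x) (u x)) h

theorem integral_dotProduct_mulVec (M : Matrix ι ι 𝕜) {u v : X → ι → 𝕜}
    (h : ∀ i j, Integrable (fun x => v x i * u x j) μ) :
    ∫ x, u x ⬝ᵥ M *ᵥ v x ∂μ = (M * of fun i j => ∫ x, v x i * u x j ∂μ).trace := by
  simpa only [dotProduct_mulVec_eq_trace_mul_vecMulVec, vecMulVec_apply] using
    integral_trace_mul M (B := fun x => vecMulVec (v x) (u x)) h

end

theorem stmt_7_general {X : Type*} [MeasurableSpace X] (μ : Measure X)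
    (n : ℕ) (k₀ k₁ : X → Fin n → ℝ)
    (K₀ K₁ : Matrix (Fin n) (Fin n) ℝ)
    (hint₀ : ∀ i j, Integrable (fun x => k₀ x i * k₀ x j) μ)
    (hint₁ : ∀ i j, Integrable (fun x => k₁ x i * k₁ x j) μ)
    (hint₀₁ : ∀ i j, Integrable (fun x => k₀ x i * k₁ x j) μ)
    (A₀ A₁ A₀₁ : Matrix (Fin n) (Fin n) ℝ)
    (hA₀ : A₀ = Matrix.of fun i j => ∫ x, k₀ x i * k₀ x j ∂μ)
    (hA₁ : A₁ = Matrix.of fun i j => ∫ x, k₁ x i * k₁ x j ∂μ)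
    (hA₀₁ : A₀₁ = Matrix.of fun i j => ∫ x, k₀ x i * k₁ x j ∂μ) :
    ∫ x, (k₀ x ⬝ᵥ K₀⁻¹ *ᵥ k₀ x + k₁ x ⬝ᵥ (K₁⁻¹ * K₀ * K₁⁻¹) *ᵥ k₁ x
        - 2 * (k₁ x ⬝ᵥ K₁⁻¹ *ᵥ k₀ x)) ∂μ =
      (K₀⁻¹ * A₀ + K₁⁻¹ * K₀ * K₁⁻¹ * A₁ - 2 • (K₁⁻¹ * A₀₁)).trace := by
  have h₀ := integrable_dotProduct_mulVec K₀⁻¹ hint₀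
  have h₁ := integrable_dotProduct_mulVec (K₁⁻¹ * K₀ * K₁⁻¹) hint₁
  have h₀₁ := integrable_dotProduct_mulVec (u := k₁) K₁⁻¹ hint₀₁
  rw [integral_sub (h₀.add h₁ : Integrable (fun x => _ + _) μ) (h₀₁.const_mul 2),
    integral_add h₀ h₁, integral_const_mul, integral_dotProduct_mulVec _ hint₀,
    integral_dotProduct_mulVec _ hint₁, integral_dotProduct_mulVec _ hint₀₁,
    trace_sub, trace_add, trace_smul, nsmul_eq_mul, Nat.cast_ofNat, hA₀, hA₁, hA₀₁]

/-- Integrated difference of MSEs: `∫ E₀{[e₁(x) − e₀(x)]²} dμ(x)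
= tr[K₀⁻¹A₀(μ) + K₁⁻¹K₀K₁⁻¹A₁(μ) − 2K₁⁻¹A₀₁(μ)]`, where
`A_i(μ) = ∫ k_i(x)k_i(x)ᵀ dμ` and `A₀₁(μ) = ∫ k₀(x)k₁(x)ᵀ dμ`. -/
theorem stmt_7 {X : Type*} [MeasurableSpace X] (μ : Measure X) [IsProbabilityMeasure μ]
    (n : ℕ) (k₀ k₁ : X → Fin n → ℝ)
    (K₀ K₁ : Matrix (Fin n) (Fin n) ℝ)
    (hK₀inv : IsUnit K₀.det) (hK₁inv : IsUnit K₁.det)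
    (hk₀m : ∀ i, Measurable fun x => k₀ x i) (hk₁m : ∀ i, Measurable fun x => k₁ x i)
    (hint₀ : ∀ i j, Integrable (fun x => k₀ x i * k₀ x j) μ)
    (hint₁ : ∀ i j, Integrable (fun x => k₁ x i * k₁ x j) μ)
    (hint₀₁ : ∀ i j, Integrable (fun x => k₀ x i * k₁ x j) μ)
    (A₀ A₁ A₀₁ : Matrix (Fin n) (Fin n) ℝ)
    (hA₀ : A₀ = Matrix.of fun i j => ∫ x, k₀ x i * k₀ x j ∂μ)
    (hA₁ : A₁ = Matrix.of fun i j => ∫ x, k₁ x i * k₁ x j ∂μ)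
    (hA₀₁ : A₀₁ = Matrix.of fun i j => ∫ x, k₀ x i * k₁ x j ∂μ) :
    ∫ x, (k₀ x ⬝ᵥ K₀⁻¹ *ᵥ k₀ x + k₁ x ⬝ᵥ (K₁⁻¹ * K₀ * K₁⁻¹) *ᵥ k₁ x
        - 2 * (k₁ x ⬝ᵥ K₁⁻¹ *ᵥ k₀ x)) ∂μ =
      (K₀⁻¹ * A₀ + K₁⁻¹ * K₀ * K₁⁻¹ * A₁ - 2 • (K₁⁻¹ * A₀₁)).trace :=
  stmt_7_general μ n k₀ k₁ K₀ K₁ hint₀ hint₁ hint₀₁ A₀ A₁ A₀₁ hA₀ hA₁ hA₀₁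
end

section
/- Let G be a finite graph on vertices {1,...,n} and consider Q(w) = Σ_{(i,j)∈E(G)} w_i w_j over the probability simplex (w_i ≥ 0, Σw_i = 1), where each unordered edge {i,j} is counted twice (ordered pairs). If G contains a complete subgraph on m vertices and m is the maximal clique size, then the maximum of Q over the simplex equals 1 − 1/m, attained at the uniform weights 1/m on the vertices of a maximum clique. -/
/-!
Write `Q(w) = wᵀ A w` with `A` the adjacency matrix. If the support of a weight vector `w` on the
simplex is a clique `t`, then `Q(w) = 1 - ∑ wᵢ²`, which is at most `1 - 1/|t|` by Cauchy–Schwarz.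
Otherwise the support contains non-adjacent `i ≠ j`; since `Aᵢᵢ = Aⱼⱼ = Aᵢⱼ = 0`, `Q` is affine
along `eⱼ - eᵢ`, so moving all the mass of `i` onto `j` or vice versa does not decrease `Q` and
shrinks the support. By induction on the size of the support, `Q(w) ≤ 1 - 1/|t|` for some clique
`t`, and uniform weights on a maximum clique attain the bound.
-/

open Finset Matrix

namespace SimpleGraph

variable {V : Type*} [Fintype V] (G : SimpleGraph V) [DecidableRel G.Adj]

theorem dotProduct_mulVec_adjMatrix_comm (x y : V → ℝ) :
    x ⬝ᵥ G.adjMatrix ℝ *ᵥ y = y ⬝ᵥ G.adjMatrix ℝ *ᵥ x := by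
  rw [dotProduct_mulVec, ← mulVec_transpose, transpose_adjMatrix, dotProduct_comm]

theorem dotProduct_mulVec_adjMatrix_self_of_isClique {t : Finset V} (ht : G.IsClique (t : Set V))
    {w : V → ℝ} (hw : ∀ k ∉ t, w k = 0) :
    w ⬝ᵥ G.adjMatrix ℝ *ᵥ w = (∑ k, w k) ^ 2 - ∑ k, w k ^ 2 := by
  classical
  have hterm (i j : V) :
      (if G.Adj i j then w i * w j else 0) = w i * w j - if i = j then w i * w j else 0 := by
    by_cases hij : i = j
    · simp [hij]
    by_cases hadj : G.Adj i j
    · simp [hadj, hij]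
    have : w i = 0 ∨ w j = 0 := by
      by_contra! hne
      exact hadj (ht (not_imp_comm.1 (hw i) hne.1) (not_imp_comm.1 (hw j) hne.2) hij)
    rcases this with h | h <;> simp [hadj, hij, h]
  simp only [dotProduct_mulVec_adjMatrix, hterm, sum_sub_distrib, sum_ite_eq, mem_univ, if_true,
    sq, sum_mul_sum]

theorem dotProduct_mulVec_adjMatrix_le_of_isClique {t : Finset V} (ht : G.IsClique (t : Set V))
    {w : V → ℝ} (hw : ∀ k ∉ t, w k = 0) (hsum : ∑ k, w k = 1) :
    w ⬝ᵥ G.adjMatrix ℝ *ᵥ w ≤ 1 - 1 / #t := by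
  have hsum_t : ∑ k ∈ t, w k = ∑ k, w k := sum_subset (subset_univ t) fun k _ hk => hw k hk
  have hsq_t : ∑ k ∈ t, w k ^ 2 = ∑ k, w k ^ 2 :=
    sum_subset (subset_univ t) fun k _ hk => by simp [hw k hk]
  have hcs : (1 : ℝ) ≤ #t * ∑ k, w k ^ 2 := by
    simpa [hsum_t, hsq_t, hsum] using sq_sum_le_card_mul_sum_sq (s := t) (f := w)
  rw [G.dotProduct_mulVec_adjMatrix_self_of_isClique ht hw, hsum, one_pow]
  exact sub_le_sub_left (div_le_of_le_mul₀ (by positivity) (by positivity) (by linarith)) 1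

variable [DecidableEq V]

theorem dotProduct_mulVec_adjMatrix_add_smul {i j : V} (h : ¬G.Adj i j) (w : V → ℝ) (t : ℝ) :
    let w' := w + t • (Pi.single j 1 - Pi.single i 1)
    w' ⬝ᵥ G.adjMatrix ℝ *ᵥ w' =
      w ⬝ᵥ G.adjMatrix ℝ *ᵥ w + 2 * t * ((G.adjMatrix ℝ *ᵥ w) j - (G.adjMatrix ℝ *ᵥ w) i) := by
  set d : V → ℝ := Pi.single j 1 - Pi.single i 1
  have hdd : d ⬝ᵥ G.adjMatrix ℝ *ᵥ d = 0 := by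
    simp [d, mulVec_sub, sub_dotProduct, adjMatrix_apply, h, G.symm.iff]
  have hdw : d ⬝ᵥ G.adjMatrix ℝ *ᵥ w = (G.adjMatrix ℝ *ᵥ w) j - (G.adjMatrix ℝ *ᵥ w) i := by
    simp only [d, sub_dotProduct, single_one_dotProduct]
  simp only [mulVec_add, add_dotProduct, dotProduct_add, mulVec_smul, smul_dotProduct,
    dotProduct_smul, G.dotProduct_mulVec_adjMatrix_comm w d, hdd, hdw, smul_eq_mul]
  ring

theorem exists_card_support_lt_of_not_adj {w : V → ℝ} (hw : ∀ k, 0 ≤ w k) {i j : V}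
    (hi : w i ≠ 0) (hj : w j ≠ 0) (hij : i ≠ j) (h : ¬G.Adj i j) :
    ∃ w' : V → ℝ, (∀ k, 0 ≤ w' k) ∧ ∑ k, w' k = ∑ k, w k ∧
      #{k | w' k ≠ 0} < #{k | w k ≠ 0} ∧
      w ⬝ᵥ G.adjMatrix ℝ *ᵥ w ≤ w' ⬝ᵥ G.adjMatrix ℝ *ᵥ w' := by
  wlog hle : (G.adjMatrix ℝ *ᵥ w) i ≤ (G.adjMatrix ℝ *ᵥ w) j generalizing i j
  · exact this hj hi hij.symm (fun h' => h h'.symm) (le_of_not_ge hle)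
  refine ⟨w + w i • (Pi.single j 1 - Pi.single i 1), fun k => ?_, ?_, ?_, ?_⟩
  · rcases eq_or_ne k i with rfl | hki
    · simp [hij]
    rcases eq_or_ne k j with rfl | hkj
    · simpa [hki] using add_nonneg (hw k) (hw i)
    · simp [hki, hkj, hw k]
  · simp [sum_add_distrib, ← mul_sum, sum_sub_distrib]
  · have hi_mem : i ∈ ({k | w k ≠ 0} : Finset V) := by simpa using hi
    refine (card_le_card fun k hk => ?_).trans_lt (card_erase_lt_of_mem hi_mem)
    rcases eq_or_ne k i with rfl | hki
    · simp [hij] at hk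
    rcases eq_or_ne k j with rfl | hkj
    · simpa [hki] using hj
    · simpa [hki, hkj] using hk
  · rw [G.dotProduct_mulVec_adjMatrix_add_smul h]
    exact le_add_of_nonneg_right (mul_nonneg (by linarith [hw i]) (sub_nonneg.2 hle))

theorem exists_isClique_dotProduct_mulVec_adjMatrix_le {w : V → ℝ} (hw : ∀ k, 0 ≤ w k)
    (hsum : ∑ k, w k = 1) :
    ∃ t : Finset V, G.IsClique (t : Set V) ∧ 0 < #t ∧
      w ⬝ᵥ G.adjMatrix ℝ *ᵥ w ≤ 1 - 1 / #t := by
  induction hN : #{k | w k ≠ 0} using Nat.strong_induction_on generalizing w with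
  | h N ih =>
    by_cases hcl : G.IsClique ({k | w k ≠ 0} : Finset V)
    · have hne : ({k | w k ≠ 0} : Finset V).Nonempty :=
        nonempty_of_sum_ne_zero (by rw [sum_filter_ne_zero, hsum]; exact one_ne_zero)
      exact ⟨_, hcl, hne.card_pos,
        G.dotProduct_mulVec_adjMatrix_le_of_isClique hcl (by simp) hsum⟩
    obtain ⟨i, hi, j, hj, hij, hnadj⟩ : ∃ i, w i ≠ 0 ∧ ∃ j, w j ≠ 0 ∧ i ≠ j ∧ ¬G.Adj i j := by
      simpa [Set.Pairwise, IsClique] using hcl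
    obtain ⟨w', hw', hsum', hcard, hle⟩ := G.exists_card_support_lt_of_not_adj hw hi hj hij hnadj
    obtain ⟨t, ht, htpos, hQ⟩ := ih _ (hN ▸ hcard) hw' (hsum'.trans hsum) rfl
    exact ⟨t, ht, htpos, hle.trans hQ⟩

end SimpleGraph

/-- Motzkin–Straus: if the clique number of `G` is `m`, then the maximum over the
probability simplex of `Q(w) = Σ_{(i,j) : Adj} wᵢwⱼ` (ordered pairs) is `1 − 1/m`,
attained at uniform weights on a maximum clique. -/
theorem stmt_11 {n : ℕ} (G : SimpleGraph (Fin n)) [DecidableRel G.Adj]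
    (m : ℕ) (s : Finset (Fin n)) (hs : G.IsNClique m s)
    (hmax : ∀ (k : ℕ) (t : Finset (Fin n)), G.IsNClique k t → k ≤ m)
    (hm : 1 ≤ m) :
    IsGreatest
      {q : ℝ | ∃ w : Fin n → ℝ, (∀ i, 0 ≤ w i) ∧ ∑ i, w i = 1 ∧
        q = ∑ i, ∑ j, if G.Adj i j then w i * w j else 0}
      (1 - 1 / m) ∧
    (∑ i, ∑ j, if G.Adj i j then
        (if i ∈ s then (1 : ℝ) / m else 0) * (if j ∈ s then (1 : ℝ) / m else 0)
      else 0) = 1 - 1 / m := by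
  set u : Fin n → ℝ := fun i => if i ∈ s then (1 : ℝ) / m else 0
  have hm0 : (m : ℝ) ≠ 0 := by positivity
  have hu_sum : ∑ i, u i = 1 := by simp [u, hs.card_eq, hm0]
  have hu : ∑ i, ∑ j, (if G.Adj i j then u i * u j else 0) = 1 - 1 / m := by
    have hu_supp : ∀ k ∉ s, u k = 0 := fun k hk => by simp [u, hk]
    rw [← G.dotProduct_mulVec_adjMatrix,
      G.dotProduct_mulVec_adjMatrix_self_of_isClique hs.isClique hu_supp, hu_sum]
    simp [u, hs.card_eq, hm0, sq]
  refine ⟨⟨⟨u, fun i => by positivity, hu_sum, hu.symm⟩, ?_⟩, hu⟩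
  rintro q ⟨w, hw, hsum, rfl⟩
  obtain ⟨t, ht, htpos, hQ⟩ := G.exists_isClique_dotProduct_mulVec_adjMatrix_le hw hsum
  have htm : (#t : ℝ) ≤ m := by exact_mod_cast hmax _ t ⟨ht, rfl⟩
  rw [← G.dotProduct_mulVec_adjMatrix]
  calc _ ≤ 1 - 1 / (#t : ℝ) := hQ
    _ ≤ 1 - 1 / m := by gcongr
end

section
/- Define ψ_*(t) = 1 if t = Δ and ψ_*(t) = 0 otherwise (Δ > 0 fixed), and for a probability measure ξ on X ⊆ ℝ^d define φ₁(ξ) = ∫∫ ψ_*(‖x − x'‖) dξ(x)dξ(x'). If X contains a regular d-dimensional simplex with edge length Δ, then the measure ξ* placing mass 1/(d+1) at each of its d+1 vertices satisfies φ₁(ξ*) = d/(d+1), and no probability measure on X achieves a larger value of φ₁. -/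
/-!
At the uniform measure on the vertices every vertex sees the other `d` vertices at distance `Δ`,
which gives the value `d / (d + 1)`.

For the upper bound, sample `k` independent points from `ξ` and join two indices whose points are
at distance `Δ`. A clique of this graph is a set of pairwise equidistant points, so it has at most
`d + 1` elements: the edge vectors at one of them have Gram matrix `Δ² / 2 • (1 + J)` and are
therefore linearly independent. Turán's theorem then bounds the number of ordered adjacent pairs
by `d / (d + 1) • k²`. Each of the `k (k - 1)` off-diagonal pairs is adjacent with probability
`φ₁(ξ)`, so `k (k - 1) φ₁(ξ) ≤ d / (d + 1) • k²` for every `k`, and `k → ∞` gives the claim.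
-/

open MeasureTheory Finset Module
open scoped ENNReal

namespace SimpleGraph

variable {V : Type*} [Fintype V] {G : SimpleGraph V} [DecidableRel G.Adj]

theorem card_filter_adj_eq_two_mul_card_edgeFinset :
    #{p : V × V | G.Adj p.1 p.2} = 2 * #G.edgeFinset := by
  rw [← dart_card_eq_twice_card_edges, ← Fintype.card_subtype]
  exact Fintype.card_congr
    { toFun := fun p => ⟨p.1, p.2⟩, invFun := fun d => ⟨d.toProd, d.adj⟩ }

theorem CliqueFree.two_mul_mul_card_edgeFinset_le {r : ℕ} (h : G.CliqueFree (r + 1)) :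
    2 * r * #G.edgeFinset ≤ (r - 1) * Fintype.card V ^ 2 := by
  rcases r.eq_zero_or_pos with rfl | hr
  · simp
  obtain ⟨H, _, hH⟩ := exists_isTuranMaximal (V := V) hr
  calc 2 * r * #G.edgeFinset ≤ 2 * r * #H.edgeFinset := Nat.mul_le_mul_left _ (hH.2 h)
    _ = 2 * r * #(turanGraph (Fintype.card V) r).edgeFinset := by
      rw [((isTuranMaximal_iff_nonempty_iso_turanGraph hr).mp hH).some.card_edgeFinset_eq]
    _ ≤ (r - 1) * Fintype.card V ^ 2 := mul_card_edgeFinset_turanGraph_le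

end SimpleGraph

section Equidistant

variable {E : Type*} [NormedAddCommGroup E] [InnerProductSpace ℝ E]

variable {s : Finset E} {p : E} {Δ : ℝ}

theorem linearIndependent_sub_of_pairwise_dist_eq (hΔ : Δ ≠ 0)
    (h : (s : Set E).Pairwise fun x y => dist x y = Δ) (hp : p ∈ s) [DecidableEq E] :
    LinearIndependent ℝ fun x : s.erase p => (x : E) - p := by
  set u : s.erase p → E := fun x => (x : E) - p
  have hnorm (x : s.erase p) : ‖u x‖ = Δ := by
    rw [← dist_eq_norm]; exact h (mem_of_mem_erase x.2) hp (ne_of_mem_erase x.2)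
  have hgram (x y : s.erase p) :
      inner ℝ (u x) (u y) = Δ ^ 2 / 2 * (1 + if x = y then 1 else 0) := by
    by_cases hxy : x = y
    · subst hxy; rw [real_inner_self_eq_norm_sq, hnorm, if_pos rfl]; ring
    · have hxy' : dist (x : E) y = Δ :=
        h (mem_of_mem_erase x.2) (mem_of_mem_erase y.2) (Subtype.coe_ne_coe.2 hxy)
      have hpol := norm_sub_sq_real (u x) (u y)
      rw [show u x - u y = x - y by simp [u], ← dist_eq_norm, hxy', hnorm, hnorm] at hpol
      rw [if_neg hxy]; linarith
  rw [Fintype.linearIndependent_iff]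
  intro g hg
  have hcoord (x : s.erase p) : ∑ y, g y + g x = 0 := by
    have h0 : inner ℝ (u x) (∑ y, g y • u y) = 0 := by rw [hg, inner_zero_right]
    simp only [inner_sum, real_inner_smul_right, hgram, mul_add, mul_one, mul_ite, mul_zero,
      sum_add_distrib, sum_ite_eq, mem_univ, if_true, ← sum_mul] at h0
    rw [← mul_left_cancel_iff_of_pos (show 0 < Δ ^ 2 / 2 by positivity)]
    linear_combination h0
  have hsum : ∑ y, g y = 0 := by
    have := sum_congr rfl fun x (_ : x ∈ univ) => hcoord x
    simp only [sum_add_distrib, sum_const, card_univ, nsmul_eq_mul] at this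
    have hcard : ((Fintype.card (s.erase p) : ℝ) + 1) * ∑ y, g y = 0 := by linarith
    exact (mul_eq_zero.1 hcard).resolve_left (by positivity)
  exact fun x => by linarith [hcoord x]

theorem card_le_finrank_add_one_of_pairwise_dist_eq [FiniteDimensional ℝ E]
    (h : (s : Set E).Pairwise fun x y => dist x y = Δ) :
    #s ≤ finrank ℝ E + 1 := by
  classical
  rcases s.eq_empty_or_nonempty with rfl | ⟨p, hp⟩
  · simp
  rcases eq_or_ne Δ 0 with rfl | hΔ
  · have : #s ≤ 1 := card_le_one.2 fun x hx y hy => by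
      by_contra hxy
      exact hxy (dist_eq_zero.1 (h hx hy hxy))
    omega
  have := (linearIndependent_sub_of_pairwise_dist_eq hΔ h hp).fintype_card_le_finrank
  rw [Fintype.card_coe, card_erase_of_mem hp] at this
  omega

end Equidistant

def distEqGraph {ι α : Type*} [PseudoMetricSpace α] (f : ι → α) (Δ : ℝ) : SimpleGraph ι where
  Adj i j := i ≠ j ∧ dist (f i) (f j) = Δ
  symm := ⟨fun _ _ h => ⟨h.1.symm, dist_comm (f _) (f _) ▸ h.2⟩⟩
  loopless := ⟨fun _ h => h.1 rfl⟩

section DistGraph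

variable {ι E : Type*} [NormedAddCommGroup E] [InnerProductSpace ℝ E] [FiniteDimensional ℝ E]
  {Δ : ℝ}

theorem distEqGraph_cliqueFree (hΔ : Δ ≠ 0) (f : ι → E) :
    (distEqGraph f Δ).CliqueFree (finrank ℝ E + 2) := by
  classical
  intro t ht
  have hinj : Set.InjOn f t := fun i hi j hj hfij => by
    by_contra hij
    exact hΔ ((ht.isClique hi hj hij).2 ▸ hfij ▸ dist_self (f j))
  have hpair : ((t.image f : Finset E) : Set E).Pairwise fun x y => dist x y = Δ := by
    simp only [coe_image]
    rintro _ ⟨i, hi, rfl⟩ _ ⟨j, hj, rfl⟩ hfij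
    exact (ht.isClique hi hj fun hij => hfij (hij ▸ rfl)).2
  have := card_le_finrank_add_one_of_pairwise_dist_eq hpair
  rw [card_image_of_injOn hinj, ht.card_eq] at this
  omega

theorem sum_offDiag_ite_dist_eq_le [Fintype ι] [DecidableEq ι] (hΔ : Δ ≠ 0) (f : ι → E) :
    (finrank ℝ E + 1) * ∑ p ∈ univ.offDiag, (if dist (f p.1) (f p.2) = Δ then 1 else 0 : ℝ)
      ≤ finrank ℝ E * Fintype.card ι ^ 2 := by
  classical
  set n := finrank ℝ E
  have hcount : #{p ∈ univ.offDiag | dist (f p.1) (f p.2) = Δ}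
      = #{p : ι × ι | (distEqGraph f Δ).Adj p.1 p.2} := by
    congr 1; ext p; simp only [mem_filter, mem_offDiag, mem_univ, true_and]; rfl
  have hturan := (distEqGraph_cliqueFree hΔ f).two_mul_mul_card_edgeFinset_le (r := n + 1)
  rw [Nat.add_sub_cancel, mul_comm 2, mul_assoc,
    ← SimpleGraph.card_filter_adj_eq_two_mul_card_edgeFinset, ← hcount] at hturan
  rw [sum_boole]
  exact_mod_cast hturan

end DistGraph

section Sampling

variable {ι α : Type*} [Fintype ι] [MeasurableSpace α] (μ : Measure α) [IsProbabilityMeasure μ]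

theorem measurePreserving_eval_prod {i j : ι} (hij : i ≠ j) :
    MeasurePreserving (fun f : ι → α => (f i, f j)) (Measure.pi fun _ => μ) (μ.prod μ) where
  measurable := (measurable_pi_apply i).prodMk (measurable_pi_apply j)
  map_eq := by
    have hindep := (ProbabilityTheory.iIndepFun_pi (μ := fun _ : ι => μ)
      (X := fun _ x => x) fun _ => aemeasurable_id).indepFun hij
    rw [hindep.map_prod_eq_prod_map_map (measurable_pi_apply i).aemeasurable
      (measurable_pi_apply j).aemeasurable, (measurePreserving_eval _ i).map_eq,
      (measurePreserving_eval _ j).map_eq]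

theorem integral_sum_offDiag_eq [DecidableEq ι] {g : α × α → ℝ} (hg : Integrable g (μ.prod μ)) :
    ∫ f, ∑ p ∈ univ.offDiag, g (f p.1, f p.2) ∂(Measure.pi fun _ : ι => μ)
      = Fintype.card ι * (Fintype.card ι - 1) * ∫ z, g z ∂(μ.prod μ) := by
  have hpair (p : ι × ι) (hp : p ∈ univ.offDiag) :=
    measurePreserving_eval_prod μ (mem_offDiag.1 hp).2.2
  have hterm (p : ι × ι) (hp : p ∈ univ.offDiag) :
      ∫ x, g (x p.1, x p.2) ∂(Measure.pi fun _ : ι => μ) = ∫ z, g z ∂(μ.prod μ) := by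
    rw [← (hpair p hp).map_eq, integral_map (hpair p hp).measurable.aemeasurable]
    exact ((hpair p hp).map_eq ▸ hg).aestronglyMeasurable
  rw [integral_finsetSum (f := fun (p : ι × ι) (x : ι → α) => g (x p.1, x p.2)) _
      fun p hp => (hpair p hp).integrable_comp_of_integrable hg,
    sum_congr rfl hterm, sum_const, offDiag_card,
    card_univ, nsmul_eq_mul, Nat.cast_sub (Nat.le_mul_self _)]
  push_cast
  ring

end Sampling

theorem le_of_forall_natCast_mul_sub_one_mul_le {x y : ℝ}
    (h : ∀ k : ℕ, (k : ℝ) * (k - 1) * x ≤ k ^ 2 * y) : x ≤ y := by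
  by_contra! hyx
  obtain ⟨k, hk⟩ := exists_nat_gt (max 1 (x / (x - y)))
  have hk0 : (0 : ℝ) < k := (zero_lt_one.trans_le (le_max_left _ _)).trans hk
  have hkx : x < k * (x - y) := (div_lt_iff₀ (sub_pos.2 hyx)).1 ((le_max_right _ _).trans_lt hk)
  nlinarith [h k, mul_lt_mul_of_pos_left hkx hk0]

section Bound

variable {E : Type*} [NormedAddCommGroup E] [InnerProductSpace ℝ E] [FiniteDimensional ℝ E]
  [MeasurableSpace E] [BorelSpace E]

theorem integral_integral_ite_dist_eq_le (ξ : Measure E) [IsProbabilityMeasure ξ] {Δ : ℝ}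
    (hΔ : Δ ≠ 0) :
    ∫ x, ∫ y, (if dist x y = Δ then 1 else 0 : ℝ) ∂ξ ∂ξ ≤ finrank ℝ E / (finrank ℝ E + 1) := by
  set n := finrank ℝ E
  set g : E × E → ℝ := fun z => if dist z.1 z.2 = Δ then 1 else 0
  have hg_nonneg (z : E × E) : 0 ≤ g z := by simp only [g]; split_ifs <;> simp
  have hg : Integrable g (ξ.prod ξ) :=
    (integrable_const (1 : ℝ)).mono'
      (measurable_const.ite (measurable_dist (measurableSet_singleton Δ))
        measurable_const).aestronglyMeasurable
      (ae_of_all _ fun z => by simp only [g]; split_ifs <;> simp)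
  have hsample (k : ℕ) : (k : ℝ) * (k - 1) * ((n + 1) * ∫ z, g z ∂(ξ.prod ξ)) ≤ k ^ 2 * n := by
    calc (k : ℝ) * (k - 1) * ((n + 1) * ∫ z, g z ∂(ξ.prod ξ))
        = ∫ f, (n + 1) * ∑ p ∈ univ.offDiag, g (f p.1, f p.2) ∂(Measure.pi fun _ : Fin k => ξ) := by
          rw [integral_const_mul, integral_sum_offDiag_eq ξ hg, Fintype.card_fin]; ring
      _ ≤ ∫ _, (n : ℝ) * k ^ 2 ∂(Measure.pi fun _ : Fin k => ξ) := by
          refine integral_mono_of_nonneg (ae_of_all _ fun f => ?_) (integrable_const _)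
            (ae_of_all _ fun f => by simpa [g] using sum_offDiag_ite_dist_eq_le hΔ f)
          exact mul_nonneg (by positivity) (sum_nonneg fun p _ => hg_nonneg _)
      _ = k ^ 2 * n := by rw [integral_const, probReal_univ, one_smul]; ring
  have hprod : ∫ x, ∫ y, (if dist x y = Δ then 1 else 0 : ℝ) ∂ξ ∂ξ = ∫ z, g z ∂(ξ.prod ξ) :=
    (integral_prod g hg).symm
  rw [hprod, le_div_iff₀ (by positivity)]
  linarith [le_of_forall_natCast_mul_sub_one_mul_le hsample]

end Bound

theorem integral_finsetSum_smul_dirac {ι α G : Type*} [MeasurableSpace α]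
    [MeasurableSingletonClass α] [NormedAddCommGroup G] [NormedSpace ℝ G] [CompleteSpace G]
    (s : Finset ι) {c : ι → ℝ≥0∞} (hc : ∀ i ∈ s, c i ≠ ∞) (x : ι → α) (f : α → G) :
    ∫ y, f y ∂(∑ i ∈ s, c i • Measure.dirac (x i)) = ∑ i ∈ s, (c i).toReal • f (x i) := by
  rw [integral_finsetSum_measure fun i hi => (integrable_dirac (by simp)).smul_measure (hc i hi)]
  simp [integral_smul_measure]

theorem integral_integral_ite_dist_eq_of_pairwise {α : Type*} [PseudoMetricSpace α]
    [MeasurableSpace α] [MeasurableSingletonClass α] {n : ℕ} {Δ : ℝ} (hΔ : Δ ≠ 0)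
    {v : Fin (n + 1) → α} (hv : Pairwise fun i j => dist (v i) (v j) = Δ) :
    ∫ x, ∫ y, (if dist x y = Δ then 1 else 0 : ℝ)
        ∂(∑ i, ((n : ℝ≥0∞) + 1)⁻¹ • Measure.dirac (v i))
        ∂(∑ i, ((n : ℝ≥0∞) + 1)⁻¹ • Measure.dirac (v i)) = n / (n + 1) := by
  have hrow (i : Fin (n + 1)) : ∑ j, (if dist (v i) (v j) = Δ then 1 else 0 : ℝ) = n := by
    have : ({j | dist (v i) (v j) = Δ} : Finset (Fin (n + 1))) = univ.erase i := by
      ext j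
      simp only [mem_filter, mem_univ, true_and, mem_erase, and_true]
      exact ⟨fun h hji => hΔ (by rw [← h, hji, dist_self]), fun hji => hv (Ne.symm hji)⟩
    rw [sum_boole, this, card_erase_of_mem (mem_univ i), card_univ, Fintype.card_fin]
    simp
  have hc : ((n : ℝ≥0∞) + 1)⁻¹ ≠ ∞ := by simp
  have hc' : ((n : ℝ≥0∞) + 1)⁻¹.toReal = ((n : ℝ) + 1)⁻¹ := by
    rw [ENNReal.toReal_inv, ← Nat.cast_add_one, ENNReal.toReal_natCast, Nat.cast_add_one]
  simp only [integral_finsetSum_smul_dirac _ (fun _ _ => hc), smul_eq_mul, ← mul_sum, hrow, hc',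
    sum_const, card_univ, Fintype.card_fin, nsmul_eq_mul]
  field_simp
  push_cast
  ring

theorem stmt_13_general (d : ℕ) (Δ : ℝ) (hΔ : 0 < Δ)
    (X : Set (EuclideanSpace ℝ (Fin d)))
    (v : Fin (d + 1) → EuclideanSpace ℝ (Fin d))
    (hdist : ∀ i j, i ≠ j → dist (v i) (v j) = Δ)
    (ψstar : ℝ → ℝ) (hψ : ψstar = fun t => if t = Δ then (1 : ℝ) else 0)
    (φ : Measure (EuclideanSpace ℝ (Fin d)) → ℝ)
    (hφ : φ = fun m => ∫ x, ∫ x', ψstar (dist x x') ∂m ∂m)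
    (ξstar : Measure (EuclideanSpace ℝ (Fin d)))
    (hξstar : ξstar = ∑ i, ((d : ENNReal) + 1)⁻¹ • Measure.dirac (v i)) :
    φ ξstar = (d : ℝ) / (d + 1) ∧
      ∀ ξ : Measure (EuclideanSpace ℝ (Fin d)), IsProbabilityMeasure ξ →
        ξ Xᶜ = 0 → φ ξ ≤ (d : ℝ) / (d + 1) := by
  subst hψ hφ hξstar
  refine ⟨integral_integral_ite_dist_eq_of_pairwise hΔ.ne' hdist, fun ξ _ _ => ?_⟩
  simpa [finrank_euclideanSpace_fin] using integral_integral_ite_dist_eq_le ξ hΔ.ne'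

/-- With `ψ_*(t) = 1_{t = Δ}` and `φ₁(ξ) = ∫∫ ψ_*(‖x−x'‖) dξ dξ`: if `X ⊆ ℝ^d`
contains the vertices of a regular `d`-simplex with edge length `Δ`, the uniform
measure `ξ*` on these `d+1` vertices satisfies `φ₁(ξ*) = d/(d+1)` and no probability
measure on `X` does better. -/
theorem stmt_13 (d : ℕ) (Δ : ℝ) (hΔ : 0 < Δ)
    (X : Set (EuclideanSpace ℝ (Fin d)))
    (v : Fin (d + 1) → EuclideanSpace ℝ (Fin d))
    (hdist : ∀ i j, i ≠ j → dist (v i) (v j) = Δ)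
    (hvX : ∀ i, v i ∈ X)
    (ψstar : ℝ → ℝ) (hψ : ψstar = fun t => if t = Δ then (1 : ℝ) else 0)
    (φ : Measure (EuclideanSpace ℝ (Fin d)) → ℝ)
    (hφ : φ = fun m => ∫ x, ∫ x', ψstar (dist x x') ∂m ∂m)
    (ξstar : Measure (EuclideanSpace ℝ (Fin d)))
    (hξstar : ξstar = ∑ i, ((d : ENNReal) + 1)⁻¹ • Measure.dirac (v i)) :
    φ ξstar = (d : ℝ) / (d + 1) ∧
      ∀ ξ : Measure (EuclideanSpace ℝ (Fin d)), IsProbabilityMeasure ξ →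
        ξ Xᶜ = 0 → φ ξ ≤ (d : ℝ) / (d + 1) :=
  stmt_13_general d Δ hΔ X v hdist ψstar hψ φ hφ ξstar hξstar
end

section
/- Let ψ : ℝ₊ → [0,1] attain its maximum value 1 uniquely at Δ with ψ(0) = 0, let x_1,...,x_{d+1} ∈ ℝ^d be a regular simplex with edge length Δ, x_* the reflection of x_k through the opposite face, and L = 2Δ√((d+1)/(2d)). For p > 0, the measure ξ̂ with mass 1/(d+1) on each x_i, i ≠ k, and mass 1/(2(d+1)) on each of x_k and x_*, satisfies φ_p(ξ̂) = d/(d+1) + ψ(L)^p / (2(d+1)²), where φ_p(ξ) = ∫∫ ψ(‖x−x'‖)^p dξ(x)dξ(x'). In particular, if ψ(L) > 0 then φ_p(ξ̂) > d/(d+1) = φ_p(ξ*), where ξ* is uniform on the simplex vertices, so ξ* is not optimal. -/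
/-!
Against a finitely supported measure the energy `∫∫ ψ(‖y - y'‖)^p` is a finite double sum, and
on this configuration the kernel `ψ(‖y - y'‖)^p` takes only three values: `0` on the diagonal, `1`
at distance `Δ`, and `ψ(L)^p` between `x_k` and `x_*`. Since `x_*` is at distance `Δ` from every
vertex other than `x_k`, splitting the mass `1/(d+1)` of `x_k` into two halves at `x_k` and `x_*`
changes only the interaction of `x_k` with itself: the two halves now interact through
`ψ(L)^p`, adding `2 · (1/(2(d+1)))² · ψ(L)^p` to the energy `d/(d+1)` of the uniform measure.
-/

open MeasureTheory Finset
open scoped ENNReal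

section DiracCombination

variable {α ι : Type*} [MeasurableSpace α] [MeasurableSingletonClass α]

theorem integrable_finsetSum_smul_dirac (f : α → ℝ) (s : Finset ι) {w : ι → ℝ≥0∞}
    (hw : ∀ i ∈ s, w i ≠ ∞) (z : ι → α) :
    Integrable f (∑ i ∈ s, w i • Measure.dirac (z i)) :=
  integrable_finsetSum_measure.2 fun i hi =>
    (integrable_dirac enorm_lt_top).smul_measure (hw i hi)

theorem integral_finsetSum_smul_dirac_s16 (f : α → ℝ) (s : Finset ι) {w : ι → ℝ≥0∞}
    (hw : ∀ i ∈ s, w i ≠ ∞) (z : ι → α) :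
    ∫ y, f y ∂(∑ i ∈ s, w i • Measure.dirac (z i)) =
      ∑ i ∈ s, (w i).toReal * f (z i) := by
  rw [integral_finsetSum_measure fun i hi =>
    (integrable_dirac enorm_lt_top).smul_measure (hw i hi)]
  simp only [integral_smul_measure, integral_dirac, smul_eq_mul]

theorem integral_add_smul_dirac {f : α → ℝ} {μ : Measure α} (hf : Integrable f μ)
    {c : ℝ≥0∞} (hc : c ≠ ∞) (z : α) :
    ∫ y, f y ∂(μ + c • Measure.dirac z) = ∫ y, f y ∂μ + c.toReal * f z := by
  rw [integral_add_measure hf ((integrable_dirac enorm_lt_top).smul_measure hc),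
    integral_smul_measure, integral_dirac, smul_eq_mul]

end DiracCombination

section KernelEnergy

variable {α ι : Type*}

noncomputable def kernelEnergy [MeasurableSpace α] (K : α → α → ℝ) (μ : Measure α) :
    ℝ :=
  ∫ y, ∫ y', K y y' ∂μ ∂μ

variable {K : α → α → ℝ} {z : ι → α}

theorem sum_kernel_of_mem [DecidableEq ι] (hK_self : ∀ y, K y y = 0)
    (hK_simplex : Pairwise fun i j => K (z i) (z j) = 1) {s : Finset ι} {i : ι} (hi : i ∈ s) :
    ∑ j ∈ s, K (z i) (z j) = #s - 1 := by
  rw [← add_sum_erase s _ hi, hK_self, zero_add,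
    sum_congr rfl fun j hj => hK_simplex (ne_of_mem_erase hj).symm, sum_const,
    card_erase_of_mem hi, nsmul_one, Nat.cast_pred (card_pos.2 ⟨i, hi⟩)]

theorem sum_kernel_of_notMem (hK_simplex : Pairwise fun i j => K (z i) (z j) = 1)
    {s : Finset ι} {i : ι} (hi : i ∉ s) :
    ∑ j ∈ s, K (z i) (z j) = #s := by
  rw [sum_congr rfl fun j hj => hK_simplex (ne_of_mem_of_not_mem hj hi).symm, sum_const,
    nsmul_one]

variable [MeasurableSpace α] [MeasurableSingletonClass α] {n : ℕ} {z : Fin (n + 1) → α}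

theorem kernelEnergy_uniform_simplex (hK_self : ∀ y, K y y = 0)
    (hK_simplex : Pairwise fun i j => K (z i) (z j) = 1) :
    kernelEnergy K (∑ i, ((n : ℝ≥0∞) + 1)⁻¹ • Measure.dirac (z i)) = n / (n + 1) := by
  have ha : ((n : ℝ≥0∞) + 1)⁻¹ ≠ ∞ := by simp
  have ha_toReal : (((n : ℝ≥0∞) + 1)⁻¹).toReal = ((n : ℝ) + 1)⁻¹ := by
    simp [ENNReal.toReal_inv, ENNReal.toReal_add]
  simp only [kernelEnergy, integral_finsetSum_smul_dirac_s16 _ _ (fun _ _ => ha), ← mul_sum,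
    sum_kernel_of_mem hK_self hK_simplex (mem_univ _), sum_const, card_univ, Fintype.card_fin,
    ha_toReal, Nat.cast_add, Nat.cast_one, add_sub_cancel_right, nsmul_eq_mul]
  field_simp

theorem kernelEnergy_split_vertex (hK_symm : ∀ y y', K y y' = K y' y)
    (hK_self : ∀ y, K y y = 0) (hK_simplex : Pairwise fun i j => K (z i) (z j) = 1)
    (k : Fin (n + 1)) {w : α} (hw : ∀ i, i ≠ k → K w (z i) = 1) :
    kernelEnergy K ((∑ i ∈ univ \ {k}, ((n : ℝ≥0∞) + 1)⁻¹ • Measure.dirac (z i))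
      + (2 * ((n : ℝ≥0∞) + 1))⁻¹ • Measure.dirac (z k)
      + (2 * ((n : ℝ≥0∞) + 1))⁻¹ • Measure.dirac w)
      = n / (n + 1) + K w (z k) / (2 * ((n : ℝ) + 1) ^ 2) := by
  set S := univ \ {k}
  set a : ℝ := ((n : ℝ) + 1)⁻¹
  set b : ℝ := (2 * ((n : ℝ) + 1))⁻¹
  have ha : ((n : ℝ≥0∞) + 1)⁻¹ ≠ ∞ := by simp
  have hb : (2 * ((n : ℝ≥0∞) + 1))⁻¹ ≠ ∞ := by simp
  have hS : #S = n := by simp [S, card_sdiff]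
  have hmemS : ∀ {i}, i ∈ S ↔ i ≠ k := by simp [S]
  have hint : ∀ f : α → ℝ,
      ∫ y, f y ∂((∑ i ∈ S, ((n : ℝ≥0∞) + 1)⁻¹ • Measure.dirac (z i))
      + (2 * ((n : ℝ≥0∞) + 1))⁻¹ • Measure.dirac (z k)
      + (2 * ((n : ℝ≥0∞) + 1))⁻¹ • Measure.dirac w)
      = a * ∑ i ∈ S, f (z i) + b * f (z k) + b * f w := by
    intro f
    have hf := integrable_finsetSum_smul_dirac f S (fun _ _ => ha) z
    have hf' := hf.add_measure ((integrable_dirac enorm_lt_top (a := z k)).smul_measure hb)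
    rw [integral_add_smul_dirac hf' hb, integral_add_smul_dirac hf hb,
      integral_finsetSum_smul_dirac_s16 _ _ (fun _ _ => ha), mul_sum]
    simp [a, b, ENNReal.toReal_inv, ENNReal.toReal_add]
  have hsumw : ∑ j ∈ S, K w (z j) = n := by
    rw [sum_congr rfl fun j hj => hw j (hmemS.1 hj), sum_const, hS, nsmul_one]
  have hvertex : ∀ i ∈ S, a * ∑ j ∈ S, K (z i) (z j) + b * K (z i) (z k) + b * K (z i) w
      = a * (n - 1) + 2 * b := by
    intro i hi
    rw [sum_kernel_of_mem hK_self hK_simplex hi, hS, hK_simplex (hmemS.1 hi), hK_symm,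
      hw i (hmemS.1 hi)]
    ring
  simp only [kernelEnergy, hint, sum_congr rfl hvertex,
    sum_kernel_of_notMem hK_simplex (by simp [S] : k ∉ S), hS, hsumw, hK_self,
    hK_symm (z k) w, sum_const, nsmul_eq_mul]
  simp only [a, b]
  field_simp
  ring

end KernelEnergy

theorem stmt_16_general (d : ℕ) (Δ : ℝ) (p : ℝ) (hp : 0 < p)
    (ψ : ℝ → ℝ)
    (hψΔ : ψ Δ = 1) (hψ0 : ψ 0 = 0)
    (x : Fin (d + 1) → EuclideanSpace ℝ (Fin d))
    (hdist : ∀ i j, i ≠ j → dist (x i) (x j) = Δ)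
    (k : Fin (d + 1)) (xstar : EuclideanSpace ℝ (Fin d))
    (L : ℝ)
    (hstar : ∀ i, i ≠ k → dist xstar (x i) = Δ)
    (hstark : dist xstar (x k) = L)
    (φ : Measure (EuclideanSpace ℝ (Fin d)) → ℝ)
    (hφ : φ = fun m => ∫ y, ∫ y', ψ (dist y y') ^ p ∂m ∂m)
    (ξhat ξstar : Measure (EuclideanSpace ℝ (Fin d)))
    (hξhat : ξhat = (∑ i ∈ univ \ {k}, ((d : ENNReal) + 1)⁻¹ • Measure.dirac (x i))
      + (2 * ((d : ENNReal) + 1))⁻¹ • Measure.dirac (x k)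
      + (2 * ((d : ENNReal) + 1))⁻¹ • Measure.dirac xstar)
    (hξstar : ξstar = ∑ i, ((d : ENNReal) + 1)⁻¹ • Measure.dirac (x i)) :
    φ ξhat = (d : ℝ) / (d + 1) + ψ L ^ p / (2 * ((d : ℝ) + 1) ^ 2) ∧
    φ ξstar = (d : ℝ) / (d + 1) ∧
    (0 < ψ L → φ ξstar < φ ξhat) := by
  set K : EuclideanSpace ℝ (Fin d) → EuclideanSpace ℝ (Fin d) → ℝ :=
    fun y y' => ψ (dist y y') ^ p
  have hφK : ∀ m, φ m = kernelEnergy K m := fun m => by rw [hφ]; rfl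
  have hK_symm : ∀ y y', K y y' = K y' y := fun y y' => by simp only [K, dist_comm]
  have hK_self : ∀ y, K y y = 0 := fun y => by simp [K, hψ0, hp.ne']
  have hK_simplex : Pairwise fun i j => K (x i) (x j) = 1 := fun i j hij => by
    simp [K, hdist i j hij, hψΔ]
  have hw : ∀ i, i ≠ k → K xstar (x i) = 1 := fun i hi => by simp [K, hstar i hi, hψΔ]
  have hhat : φ ξhat = d / (d + 1) + ψ L ^ p / (2 * ((d : ℝ) + 1) ^ 2) := by
    rw [hφK, hξhat, kernelEnergy_split_vertex hK_symm hK_self hK_simplex k hw]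
    simp only [K, hstark]
  have hunif : φ ξstar = d / (d + 1) := by
    rw [hφK, hξstar, kernelEnergy_uniform_simplex hK_self hK_simplex]
  refine ⟨hhat, hunif, fun hψL => ?_⟩
  rw [hhat, hunif, lt_add_iff_pos_right]
  positivity

/-- The measure `ξ̂` splitting the weight of vertex `x k` between `x k` and its mirror
image `x⋆` satisfies `φ_p(ξ̂) = d/(d+1) + ψ(L)^p/(2(d+1)²)`; in particular, if
`ψ(L) > 0` this exceeds `φ_p(ξ*) = d/(d+1)` for the uniform measure `ξ*` on the
simplex vertices, so `ξ*` is not optimal. -/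
theorem stmt_16 (d : ℕ) (hd : 1 ≤ d) (Δ : ℝ) (hΔ : 0 < Δ) (p : ℝ) (hp : 0 < p)
    (ψ : ℝ → ℝ) (hψm : Measurable ψ)
    (hψrange : ∀ t, 0 ≤ ψ t ∧ ψ t ≤ 1)
    (hψΔ : ψ Δ = 1) (hψ0 : ψ 0 = 0)
    (hψmax : ∀ t, 0 ≤ t → t ≠ Δ → ψ t < 1)
    (x : Fin (d + 1) → EuclideanSpace ℝ (Fin d))
    (hdist : ∀ i j, i ≠ j → dist (x i) (x j) = Δ)
    (k : Fin (d + 1)) (xstar : EuclideanSpace ℝ (Fin d))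
    (L : ℝ) (hL : L = 2 * Δ * Real.sqrt ((d + 1) / (2 * d)))
    (hstar : ∀ i, i ≠ k → dist xstar (x i) = Δ)
    (hstark : dist xstar (x k) = L)
    (φ : Measure (EuclideanSpace ℝ (Fin d)) → ℝ)
    (hφ : φ = fun m => ∫ y, ∫ y', ψ (dist y y') ^ p ∂m ∂m)
    (ξhat ξstar : Measure (EuclideanSpace ℝ (Fin d)))
    (hξhat : ξhat = (∑ i ∈ univ \ {k}, ((d : ENNReal) + 1)⁻¹ • Measure.dirac (x i))
      + (2 * ((d : ENNReal) + 1))⁻¹ • Measure.dirac (x k)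
      + (2 * ((d : ENNReal) + 1))⁻¹ • Measure.dirac xstar)
    (hξstar : ξstar = ∑ i, ((d : ENNReal) + 1)⁻¹ • Measure.dirac (x i)) :
    φ ξhat = (d : ℝ) / (d + 1) + ψ L ^ p / (2 * ((d : ℝ) + 1) ^ 2) ∧
    φ ξstar = (d : ℝ) / (d + 1) ∧
    (0 < ψ L → φ ξstar < φ ξhat) :=
  stmt_16_general d Δ p hp ψ hψΔ hψ0 x hdist k xstar L hstar hstark φ hφ ξhat ξstar hξhat hξstar
end
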